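/- If there exists a (c, t-1) NLP-packing in an abelian group G of order t²c², and s divides t, then there exists an (sc, t/s − 1) NLP-packing in G, obtained by taking unions of s consecutive members among the first t−s sets. -/
import Mathlib


open Finset BigOperators

variable {G : Type*}

/-- Number of ordered pairs `(x,y)` with `x,y ∈ D`, `x ≠ y`, `x * y⁻¹ = g`. -/
noncomputable def diffCount [Group G] (D : Set G) (g : G) : ℕ :=
  Nat.card {p : G × G // p.1 ∈ D ∧ p.2 ∈ D ∧ p.1 ≠ p.2 ∧ p.1 * p.2⁻¹ = g}

/-- `D` is a `(v,k,λ,μ)` partial difference set in `G`. -/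
def IsPDS [Group G] (D : Set G) (v k : ℕ) (l m : ℤ) : Prop :=
  Nat.card G = v ∧ Nat.card D = k ∧
    ∀ g : G, g ≠ 1 →
      (g ∈ D → (diffCount D g : ℤ) = l) ∧ (g ∉ D → (diffCount D g : ℤ) = m)

/-- A regular PDS: a PDS avoiding the identity and closed under inversion. -/
def IsRegularPDS [Group G] (D : Set G) (v k : ℕ) (l m : ℤ) : Prop :=
  IsPDS D v k l m ∧ (1 : G) ∉ D ∧ D⁻¹ = D

/-- A regular `(n,r)` Latin square type PDS. -/
def IsLatinPDS [Group G] (D : Set G) (n r : ℕ) : Prop :=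
  IsRegularPDS D (n ^ 2) (r * (n - 1)) ((n : ℤ) + (r : ℤ) ^ 2 - 3 * r) ((r : ℤ) ^ 2 - r)

/-- A regular `(n,r)` negative Latin square type PDS. -/
def IsNegLatinPDS [Group G] (D : Set G) (n r : ℕ) : Prop :=
  IsRegularPDS D (n ^ 2) (r * (n + 1)) (-(n : ℤ) + (r : ℤ) ^ 2 + 3 * r) ((r : ℤ) ^ 2 + r)

/-- Character sum `χ(D) = ∑_{d ∈ D} χ(d)`. -/
noncomputable def charSum [Group G] (χ : G →* ℂˣ) (D : Set G) : ℂ :=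
  ∑ᶠ d ∈ D, (χ d : ℂ)

/-- The multiset of character sums `{χ(P 0), …, χ(P (t-1))}`. -/
noncomputable def charMultiset [Group G] {t : ℕ} (χ : G →* ℂˣ) (P : Fin t → Set G) :
    Multiset ℂ :=
  (Finset.univ.val : Multiset (Fin t)).map fun i => charSum χ (P i)

/-- `χ` is principal on the subgroup `U`. -/
def IsPrincipalOn [Group G] (χ : G →* ℂˣ) (U : Subgroup G) : Prop :=
  ∀ u ∈ U, χ u = 1

/-- A `(c,t)` LP-packing in `G` relative to `U`. -/
def IsLPPacking [CommGroup G] (c t : ℕ) (P : Fin t → Set G) (U : Subgroup G) : Prop :=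
  Nat.card G = t ^ 2 * c ^ 2 ∧ Nat.card U = t * c ∧
    (∀ i, IsLatinPDS (P i) (t * c) c) ∧
    (∀ i j, i ≠ j → Disjoint (P i) (P j)) ∧
    (⋃ i, P i) = Set.univ \ (U : Set G)

/-- A `(c,t-1)` NLP-packing in `G`. -/
def IsNLPPacking [CommGroup G] (c t : ℕ) (P : Fin (t - 1) → Set G) : Prop :=
  Nat.card G = t ^ 2 * c ^ 2 ∧
    (∀ i, IsNegLatinPDS (P i) (t * c) c) ∧
    IsNegLatinPDS (Set.univ \ ({1} ∪ ⋃ i, P i)) (t * c) (c - 1)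

/-- A `(c,t)` LP-partition in `G − V` relative to `H`. -/
def IsLPPartition [CommGroup G] (c t : ℕ) (R : Fin t → Set G) (V H : Subgroup G) : Prop :=
  Nat.card G = t ^ 2 * c ^ 2 ∧ Nat.card V = t * c ^ 2 ∧ H ≤ V ∧
    (∀ i, Nat.card (R i) = (t - 1) * c ^ 2) ∧
    (∀ i j, i ≠ j → Disjoint (R i) (R j)) ∧
    (⋃ i, R i) = Set.univ \ (V : Set G) ∧
    ∀ χ : G →* ℂˣ, χ ≠ 1 →
      (IsPrincipalOn χ V → charMultiset χ R = Multiset.replicate t (-(c : ℂ) ^ 2)) ∧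
      (¬ IsPrincipalOn χ V → IsPrincipalOn χ H →
        charMultiset χ R = Multiset.replicate t 0) ∧
      (¬ IsPrincipalOn χ H →
        charMultiset χ R = ((t : ℂ) - 1) * (c : ℂ) ::ₘ Multiset.replicate (t - 1) (-(c : ℂ)))

section Aux
open scoped Classical
variable {G : Type*} [CommGroup G] [Fintype G]


private lemma hasEnough : HasEnoughRootsOfUnity ℂ (Monoid.exponent G) := by
  have : NeZero ((Monoid.exponent G : ℂ)) :=
    ⟨by exact_mod_cast (Nat.cast_ne_zero (R := ℂ)).mpr (Monoid.exponent_ne_zero_of_finite (G := G))⟩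
  infer_instance

private lemma dualFinite : Finite (G →* ℂˣ) := by
  have := hasEnough (G := G)
  obtain ⟨e⟩ := CommGroup.monoidHom_mulEquiv_of_hasEnoughRootsOfUnity G ℂ
  exact Finite.of_equiv G e.symm.toEquiv

/-- second orthogonality relation -/
private lemma sum_dual_eq_zero [Fintype (G →* ℂˣ)] {g : G} (hg : g ≠ 1) :
    ∑ χ : G →* ℂˣ, (χ g : ℂ) = 0 := by
  have := hasEnough (G := G)
  obtain ⟨χ₀, hχ₀⟩ := CommGroup.exists_apply_ne_one_of_hasEnoughRootsOfUnity G ℂ hg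
  set S := ∑ χ : G →* ℂˣ, (χ g : ℂ) with hS
  have h1 : (χ₀ g : ℂ) * S = S := by
    rw [hS, Finset.mul_sum]
    exact Fintype.sum_equiv (Equiv.mulLeft χ₀) _ _ (fun χ => by simp [Units.val_mul])
  have h2 : ((χ₀ g : ℂ) - 1) * S = 0 := by linear_combination h1
  rcases mul_eq_zero.mp h2 with h | h
  · exact absurd (Units.ext (sub_eq_zero.mp h)) hχ₀
  · exact h

/-- first orthogonality: sum of a nonprincipal character over the group -/
private lemma sum_char_eq_zero {χ : G →* ℂˣ} (hχ : χ ≠ 1) :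
    ∑ g : G, (χ g : ℂ) = 0 := by
  obtain ⟨g₀, hg₀⟩ : ∃ g₀, χ g₀ ≠ 1 := by
    by_contra hcon
    push_neg at hcon
    exact hχ (MonoidHom.ext fun g => by simpa using hcon g)
  set S := ∑ g : G, (χ g : ℂ) with hS
  have h1 : (χ g₀ : ℂ) * S = S := by
    rw [hS, Finset.mul_sum]
    exact Fintype.sum_equiv (Equiv.mulLeft g₀) _ _ (fun g => by simp [Units.val_mul])
  have h2 : ((χ g₀ : ℂ) - 1) * S = 0 := by linear_combination h1
  rcases mul_eq_zero.mp h2 with h | h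
  · exact absurd (Units.ext (sub_eq_zero.mp h)) hg₀
  · exact h

/-- Fourier inversion: if all character transforms of `f` vanish, `f = 0`. -/
private lemma inversion (f : G → ℂ)
    (h : ∀ χ : G →* ℂˣ, ∑ g : G, f g * (χ g : ℂ) = 0) (g₀ : G) : f g₀ = 0 := by
  have : Finite (G →* ℂˣ) := dualFinite
  have : Fintype (G →* ℂˣ) := Fintype.ofFinite _
  have key : ∑ χ : G →* ℂˣ, ((χ g₀)⁻¹ : ℂˣ) * ∑ g : G, f g * (χ g : ℂ) = 0 := by
    simp [h]
  have e1 : ∀ χ : G →* ℂˣ, (((χ g₀)⁻¹ : ℂˣ) : ℂ) * ∑ g : G, f g * (χ g : ℂ)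
      = ∑ g : G, f g * (χ (g₀⁻¹ * g) : ℂ) := fun χ => by
    rw [Finset.mul_sum]
    refine Finset.sum_congr rfl fun g _ => ?_
    simp only [map_mul, map_inv, Units.val_mul]
    ring
  rw [Finset.sum_congr rfl (fun χ _ => e1 χ), Finset.sum_comm] at key
  have key2 : ∑ g : G, f g * (∑ χ : G →* ℂˣ, (χ (g₀⁻¹ * g) : ℂ)) = 0 := by
    rw [← key]
    exact Finset.sum_congr rfl fun g _ => by rw [Finset.mul_sum]
  have key3 : ∑ g : G, f g * (if g = g₀ then (Fintype.card (G →* ℂˣ) : ℂ) else 0) = 0 := by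
    refine Eq.trans (Finset.sum_congr rfl fun g _ => ?_) key2
    by_cases hgg : g = g₀
    · subst hgg; simp
    · have hne : g₀⁻¹ * g ≠ 1 := fun hh => hgg (by rwa [inv_mul_eq_one, eq_comm] at hh)
      rw [if_neg hgg, mul_zero, sum_dual_eq_zero hne, mul_zero]

  simp only [mul_ite, mul_zero, Finset.sum_ite_eq' Finset.univ, Finset.mem_univ, if_true] at key3
  have hcard : (Fintype.card (G →* ℂˣ) : ℂ) ≠ 0 := by
    exact_mod_cast Nat.cast_ne_zero.mpr Fintype.card_ne_zero
  rcases mul_eq_zero.mp key3 with h' | h'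
  · exact h'
  · exact absurd h' hcard


private noncomputable def ind (D : Set G) (g : G) : ℂ := if g ∈ D then 1 else 0

private noncomputable def cnt (D : Set G) (g : G) : ℕ :=
  (Finset.univ.filter (fun y : G => y ∈ D ∧ g * y ∈ D)).card

private lemma cnt_cast (D : Set G) (g : G) :
    (cnt D g : ℂ) = ∑ y : G, ind D y * ind D (g * y) := by
  rw [cnt, Finset.card_filter]
  push_cast
  refine Finset.sum_congr rfl fun y _ => ?_
  by_cases h1 : y ∈ D <;> by_cases h2 : g * y ∈ D <;> simp [ind, h1, h2]

private lemma cnt_one (D : Set G) : cnt D 1 = Nat.card D := by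
  rw [cnt, Nat.card_eq_fintype_card, Fintype.card_subtype]
  congr 1
  ext y
  simp

private lemma diffCount_eq_cnt (D : Set G) {g : G} (hg : g ≠ 1) :
    diffCount D g = cnt D g := by
  rw [diffCount, cnt, ← Fintype.card_subtype, ← Nat.card_eq_fintype_card]
  refine Nat.card_congr ⟨fun p => ⟨p.1.2, p.2.2.1, ?_⟩, fun y => ⟨(g * y.1, y.1), y.2.2, y.2.1, ?_, ?_⟩, ?_, ?_⟩
  · have : p.1.1 = g * p.1.2 := by
      have := p.2.2.2.2
      rwa [mul_inv_eq_iff_eq_mul] at this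
    rw [← this]; exact p.2.1
  · intro hcon
    exact hg (by simpa using congrArg (fun z => z * y.1⁻¹) hcon)
  · exact mul_inv_cancel_right g y.1
  · intro p
    apply Subtype.ext
    have : p.1.1 = g * p.1.2 := by
      have := p.2.2.2.2
      rwa [mul_inv_eq_iff_eq_mul] at this
    exact Prod.ext this.symm rfl
  · intro y; rfl

private lemma charSum_eq (χ : G →* ℂˣ) (D : Set G) :
    charSum χ D = ∑ g : G, ind D g * (χ g : ℂ) := by
  rw [charSum]
  have hD : D = ↑(Finset.univ.filter (· ∈ D)) := by ext x; simp
  conv_lhs => rw [hD]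
  rw [finsum_mem_coe_finset, Finset.sum_filter]
  exact Finset.sum_congr rfl fun g _ => by by_cases hgD : g ∈ D <;> simp [ind, hgD]

private lemma charSum_one (D : Set G) : charSum (1 : G →* ℂˣ) D = (Nat.card D : ℂ) := by
  rw [charSum_eq, Nat.card_eq_fintype_card, Fintype.card_subtype]
  rw [Finset.card_filter]
  push_cast
  refine Finset.sum_congr rfl fun g _ => ?_
  by_cases hgD : g ∈ D <;> simp [ind, hgD]

private lemma transform_cnt (χ : G →* ℂˣ) (D : Set G) (hsym : D⁻¹ = D) :
    ∑ g : G, (cnt D g : ℂ) * (χ g : ℂ) = (charSum χ D) ^ 2 := by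
  have step1 : ∑ g : G, (cnt D g : ℂ) * (χ g : ℂ)
      = ∑ y : G, ∑ g : G, ind D y * ind D (g * y) * (χ g : ℂ) := by
    rw [Finset.sum_comm]
    refine Finset.sum_congr rfl fun g _ => ?_
    rw [cnt_cast, Finset.sum_mul]
  have step2 : ∀ y : G, ∑ g : G, ind D y * ind D (g * y) * (χ g : ℂ)
      = ∑ x : G, ind D y * ind D x * (χ (x * y⁻¹) : ℂ) := by
    intro y
    refine (Fintype.sum_equiv (Equiv.mulRight y⁻¹) _ _ fun x => ?_).symm
    simp [inv_mul_cancel_right]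
  have step3 : ∑ y : G, ∑ x : G, ind D y * ind D x * (χ (x * y⁻¹) : ℂ)
      = (∑ y : G, ind D y * (χ y⁻¹ : ℂ)) * (∑ x : G, ind D x * (χ x : ℂ)) := by
    rw [Finset.sum_mul_sum]
    refine Finset.sum_congr rfl fun y _ => Finset.sum_congr rfl fun x _ => ?_
    simp only [map_mul, Units.val_mul]
    ring
  have step4 : ∑ y : G, ind D y * (χ y⁻¹ : ℂ) = ∑ y : G, ind D y * (χ y : ℂ) := by
    refine Fintype.sum_equiv (Equiv.inv G) _ _ fun y => ?_
    have hmem : y⁻¹ ∈ D ↔ y ∈ D := by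
      conv_lhs => rw [← hsym]
      rw [Set.mem_inv, inv_inv]
    have : ind D y = ind D y⁻¹ := by simp only [ind, hmem]
    rw [Equiv.inv_apply, ← this]
  rw [step1, Finset.sum_congr rfl fun y _ => step2 y, step3, step4, charSum_eq, sq]

private noncomputable def Ffun (D : Set G) (n r : ℕ) (g : G) : ℂ :=
  (cnt D g : ℂ) - (if g = 1 then ((r * (n + 1) : ℕ) : ℂ) else 0)
    - (-(n : ℂ) + (r : ℂ) ^ 2 + 3 * r) * ind D g
    - ((r : ℂ) ^ 2 + (r : ℂ)) * (if g ≠ 1 ∧ g ∉ D then 1 else 0)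

private lemma transform_master (χ : G →* ℂˣ) (D : Set G) (n r : ℕ)
    (hsym : D⁻¹ = D) (h1 : (1 : G) ∉ D) :
    ∑ g : G, Ffun D n r g * (χ g : ℂ)
      = (charSum χ D) ^ 2 - ((r * (n + 1) : ℕ) : ℂ)
        - (-(n : ℂ) + (r : ℂ) ^ 2 + 3 * r) * charSum χ D
        - ((r : ℂ) ^ 2 + (r : ℂ)) * ((∑ g : G, (χ g : ℂ)) - 1 - charSum χ D) := by
  have expand : ∀ g : G, Ffun D n r g * (χ g : ℂ)
      = (cnt D g : ℂ) * χ g - (if g = 1 then ((r * (n + 1) : ℕ) : ℂ) * χ g else 0)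
        - (-(n : ℂ) + (r : ℂ) ^ 2 + 3 * r) * (ind D g * χ g)
        - ((r : ℂ) ^ 2 + (r : ℂ)) * (((χ g : ℂ) - (if g = 1 then 1 else 0) - ind D g * χ g)) := by
    intro g
    unfold Ffun ind
    by_cases hg : g = 1
    · subst hg
      simp [h1]
      try ring
    · by_cases hgD : g ∈ D
      · simp [hg, hgD]
        try ring
      · simp [hg, hgD]
        try ring
  rw [Finset.sum_congr rfl fun g _ => expand g]
  rw [Finset.sum_sub_distrib, Finset.sum_sub_distrib, Finset.sum_sub_distrib]
  rw [transform_cnt χ D hsym, ← Finset.mul_sum, ← Finset.mul_sum]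
  rw [Finset.sum_ite_eq' Finset.univ (1 : G) (fun g => ((r * (n + 1) : ℕ) : ℂ) * (χ g : ℂ))]
  rw [Finset.sum_sub_distrib, Finset.sum_sub_distrib]
  rw [Finset.sum_ite_eq' Finset.univ (1 : G) (fun _ => (1 : ℂ))]
  simp only [Finset.mem_univ, if_true, map_one, Units.val_one, mul_one, ← charSum_eq]

private lemma negLatin_char {D : Set G} {n r : ℕ}
    (h : IsNegLatinPDS D n r) {χ : G →* ℂˣ} (hχ : χ ≠ 1) :
    charSum χ D = (r : ℂ) ∨ charSum χ D = (r : ℂ) - (n : ℂ) := by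
  obtain ⟨⟨hv, hk, hcnt⟩, h1, hsym⟩ := h
  have hF : ∀ g : G, Ffun D n r g = 0 := by
    intro g
    unfold Ffun
    by_cases hg : g = 1
    · subst hg
      rw [cnt_one, hk]
      simp [ind, h1]
    · by_cases hgD : g ∈ D
      · have h2 := (hcnt g hg).1 hgD
        have hc : (cnt D g : ℂ) = -(n : ℂ) + (r : ℂ) ^ 2 + 3 * r := by
          rw [← diffCount_eq_cnt D hg]
          have : ((diffCount D g : ℤ) : ℂ) = ((-(n : ℤ) + (r : ℤ) ^ 2 + 3 * r : ℤ) : ℂ) := by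
            rw [h2]
          push_cast at this ⊢
          linear_combination this
        rw [hc]
        simp [ind, hg, hgD]
      · have h2 := (hcnt g hg).2 hgD
        have hc : (cnt D g : ℂ) = (r : ℂ) ^ 2 + r := by
          rw [← diffCount_eq_cnt D hg]
          have : ((diffCount D g : ℤ) : ℂ) = (((r : ℤ) ^ 2 + r : ℤ) : ℂ) := by rw [h2]
          push_cast at this ⊢
          linear_combination this
        rw [hc]
        simp [ind, hg, hgD]
  have hT := transform_master χ D n r hsym h1
  rw [Finset.sum_congr rfl (fun g _ => by rw [hF g, zero_mul]), Finset.sum_const_zero] at hT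
  rw [sum_char_eq_zero hχ] at hT
  have key : (charSum χ D - (r : ℂ)) * (charSum χ D - ((r : ℂ) - n)) = 0 := by
    push_cast at hT
    linear_combination -hT
  rcases mul_eq_zero.mp key with hx | hx
  · exact Or.inl (sub_eq_zero.mp hx)
  · exact Or.inr (sub_eq_zero.mp hx)

private lemma char_negLatin {D : Set G} {n r : ℕ}
    (hv : Nat.card G = n ^ 2) (hk : Nat.card D = r * (n + 1))
    (h1 : (1 : G) ∉ D) (hsym : D⁻¹ = D)
    (hchar : ∀ χ : G →* ℂˣ, χ ≠ 1 → charSum χ D = (r : ℂ) ∨ charSum χ D = (r : ℂ) - n) :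
    IsNegLatinPDS D n r := by
  have hF : ∀ g : G, Ffun D n r g = 0 := by
    refine inversion _ (fun χ => ?_)
    rw [transform_master χ D n r hsym h1]
    by_cases hχ : χ = 1
    · subst hχ
      rw [charSum_one, hk]
      have hsum : ∑ g : G, ((1 : G →* ℂˣ) g : ℂ) = ((n : ℂ)) ^ 2 := by
        simp only [MonoidHom.one_apply, Units.val_one, Finset.sum_const, Finset.card_univ,
          nsmul_eq_mul, mul_one]
        rw [← Nat.card_eq_fintype_card, hv]
        push_cast
        ring
      rw [hsum]
      push_cast
      ring
    · rw [sum_char_eq_zero hχ]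
      rcases hchar χ hχ with hx | hx <;> rw [hx] <;> push_cast <;> ring
  refine ⟨⟨hv, hk, fun g hg => ⟨fun hgD => ?_, fun hgD => ?_⟩⟩, h1, hsym⟩
  · have := hF g
    unfold Ffun at this
    rw [if_neg hg, if_neg (by simp [hgD] : ¬(g ≠ 1 ∧ g ∉ D))] at this
    simp only [ind, if_pos hgD, mul_one, mul_zero, sub_zero] at this
    have hc : ((diffCount D g : ℤ) : ℂ) = ((-(n : ℤ) + (r : ℤ) ^ 2 + 3 * r : ℤ) : ℂ) := by
      rw [diffCount_eq_cnt D hg]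
      push_cast
      push_cast at this
      linear_combination this
    exact_mod_cast hc
  · have := hF g
    unfold Ffun at this
    rw [if_neg hg, if_pos (⟨hg, hgD⟩ : g ≠ 1 ∧ g ∉ D)] at this
    simp only [ind, if_neg hgD, mul_zero, sub_zero, mul_one] at this
    have hc : ((diffCount D g : ℤ) : ℂ) = (((r : ℤ) ^ 2 + r : ℤ) : ℂ) := by
      rw [diffCount_eq_cnt D hg]
      push_cast
      push_cast at this
      linear_combination this
    exact_mod_cast hc

private noncomputable def indN (D : Set G) (g : G) : ℕ := if g ∈ D then 1 else 0

private lemma indN_sum (D : Set G) : ∑ g : G, indN D g = Nat.card D := by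
  rw [Nat.card_eq_fintype_card, Fintype.card_subtype, Finset.card_filter]
  exact Finset.sum_congr rfl fun g _ => rfl

private lemma indicator_partition {c t : ℕ} {P : Fin (t - 1) → Set G}
    (h : IsNLPPacking c t P) (g : G) :
    (if g = 1 then 1 else 0) + indN (Set.univ \ ({1} ∪ ⋃ i, P i)) g
      + ∑ i : Fin (t - 1), indN (P i) g = 1 := by
  obtain ⟨hv, hP, hN⟩ := h
  set N := Set.univ \ ({1} ∪ ⋃ i, P i) with hNdef
  -- cardinalities
  have hct : 1 ≤ c ∧ 1 ≤ t := by
    by_contra hcon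
    have : t ^ 2 * c ^ 2 = 0 := by
      rcases not_and_or.mp hcon with h' | h' <;> push_neg at h' <;>
        [(rw [Nat.lt_one_iff] at h'; rw [h']; ring); (rw [Nat.lt_one_iff] at h'; rw [h']; ring)]
    rw [this] at hv
    have : 0 < Nat.card G := Nat.card_pos
    omega
  obtain ⟨hc, ht⟩ := hct
  have hcardP : ∀ i, Nat.card (P i) = c * (t * c + 1) := fun i => (hP i).1.2.1
  have hcardN : Nat.card N = (c - 1) * (t * c + 1) := hN.1.2.1
  -- total sum
  have hfun : ∀ g : G, (1 : ℕ) ≤ (if g = 1 then 1 else 0) + indN N g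
      + ∑ i : Fin (t - 1), indN (P i) g := by
    intro g
    by_cases hg : g = 1
    · rw [if_pos hg]; omega
    · by_cases hgN : g ∈ N
      · rw [indN, if_pos hgN]; omega
      · have : g ∈ ⋃ i, P i := by
          rw [hNdef] at hgN
          simp only [Set.mem_diff, Set.mem_univ, true_and, not_not] at hgN
          rcases hgN with h1 | h2
          · exact absurd h1 hg
          · exact h2
        obtain ⟨i, hi⟩ := Set.mem_iUnion.mp this
        calc (1 : ℕ) = indN (P i) g := by rw [indN, if_pos hi]
          _ ≤ ∑ i : Fin (t - 1), indN (P i) g :=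
            Finset.single_le_sum (f := fun i : Fin (t - 1) => indN (P i) g)
              (fun _ _ => Nat.zero_le _) (Finset.mem_univ i)
          _ ≤ _ := by omega
  have htot : ∑ g : G, ((if g = 1 then 1 else 0) + indN N g
      + ∑ i : Fin (t - 1), indN (P i) g) = ∑ g : G, (1 : ℕ) := by
    rw [Finset.sum_add_distrib, Finset.sum_add_distrib, Finset.sum_comm (γ := G)]
    rw [Finset.sum_ite_eq' Finset.univ (1 : G) (fun _ => (1:ℕ))]
    rw [indN_sum N, hcardN, Finset.sum_congr rfl (fun i (_ : i ∈ Finset.univ) => indN_sum (P i)),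
      Finset.sum_congr rfl (fun i (_ : i ∈ Finset.univ) => hcardP i)]
    simp only [Finset.mem_univ, if_true, Finset.sum_const, Finset.card_univ,
      Fintype.card_fin, smul_eq_mul, mul_one]
    rw [← Nat.card_eq_fintype_card, hv]
    obtain ⟨c', rfl⟩ : ∃ c', c = c' + 1 := ⟨c - 1, by omega⟩
    obtain ⟨t', rfl⟩ : ∃ t', t = t' + 1 := ⟨t - 1, by omega⟩
    simp only [Nat.add_sub_cancel]
    ring
  have := (Finset.sum_eq_sum_iff_of_le (fun g (_ : g ∈ Finset.univ) => hfun g)).mp htot.symm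
  exact (this g (Finset.mem_univ g)).symm

private lemma indN_cast (D : Set G) (g : G) : ((indN D g : ℕ) : ℂ) = ind D g := by
  rw [indN, ind]; split <;> simp

private lemma pack_disjoint {c t : ℕ} {P : Fin (t - 1) → Set G} (h : IsNLPPacking c t P) :
    ∀ i j : Fin (t - 1), i ≠ j → Disjoint (P i) (P j) := by
  intro i j hij
  rw [Set.disjoint_left]
  intro g hgi hgj
  have hpart := indicator_partition h g
  have h2 : 2 ≤ ∑ k : Fin (t - 1), indN (P k) g := by
    have hpair : ∑ k ∈ ({i, j} : Finset (Fin (t - 1))), indN (P k) g = 2 := by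
      rw [Finset.sum_pair hij, indN, indN, if_pos hgi, if_pos hgj]
    rw [← hpair]
    exact Finset.sum_le_sum_of_subset (Finset.subset_univ _)
  omega

private lemma pack_charSum_partition {c t : ℕ} {P : Fin (t - 1) → Set G}
    (h : IsNLPPacking c t P) (χ : G →* ℂˣ) :
    ∑ g : G, (χ g : ℂ)
      = 1 + charSum χ (Set.univ \ ({1} ∪ ⋃ i, P i)) + ∑ i, charSum χ (P i) := by
  set N := Set.univ \ ({1} ∪ ⋃ i, P i) with hNdef
  have key : ∀ g : G, (χ g : ℂ) = (if g = 1 then (χ g : ℂ) else 0)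
      + ind N g * (χ g : ℂ) + ∑ i, ind (P i) g * (χ g : ℂ) := by
    intro g
    have hp := indicator_partition h g
    have hc : (((if g = 1 then 1 else 0) + indN N g
        + ∑ i : Fin (t - 1), indN (P i) g : ℕ) : ℂ) = 1 := by rw [hp]; norm_num
    rw [Nat.cast_add, Nat.cast_add, Nat.cast_sum] at hc
    have hite : (((if g = 1 then 1 else 0 : ℕ)) : ℂ) = (if g = 1 then (1 : ℂ) else 0) := by
      split <;> simp
    rw [hite, indN_cast, Finset.sum_congr rfl (fun i (_ : i ∈ Finset.univ) => indN_cast (P i) g)]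
      at hc
    calc (χ g : ℂ) = ((if g = 1 then (1 : ℂ) else 0) + ind N g + ∑ i, ind (P i) g) * (χ g : ℂ) := by
          rw [hc, one_mul]
      _ = (if g = 1 then (χ g : ℂ) else 0) + ind N g * (χ g : ℂ)
          + ∑ i, ind (P i) g * (χ g : ℂ) := by
          rw [add_mul, add_mul, ite_mul, zero_mul, one_mul, Finset.sum_mul]
  rw [Finset.sum_congr rfl (fun g (_ : g ∈ Finset.univ) => key g)]
  rw [Finset.sum_add_distrib, Finset.sum_add_distrib]
  rw [Finset.sum_ite_eq' Finset.univ (1 : G) (fun g => (χ g : ℂ))]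
  rw [Finset.sum_comm]
  simp only [Finset.mem_univ, if_true, map_one, Units.val_one, ← charSum_eq]

private lemma charSum_biUnion_finset {ι : Type*} (χ : G →* ℂˣ) (Pf : ι → Set G)
    (S : Finset ι) (hdisj : ∀ i ∈ S, ∀ j ∈ S, i ≠ j → Disjoint (Pf i) (Pf j)) :
    charSum χ (⋃ j ∈ S, Pf j) = ∑ j ∈ S, charSum χ (Pf j) := by
  classical
  induction S using Finset.induction_on with
  | empty => simp [charSum]
  | @insert a S ha ih =>
    have hrw : (⋃ j ∈ insert a S, Pf j) = Pf a ∪ ⋃ j ∈ S, Pf j := by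
      simp [Set.biUnion_insert]
    rw [hrw, Finset.sum_insert ha, ← ih (fun i hi j hj hij =>
      hdisj i (Finset.mem_insert_of_mem hi) j (Finset.mem_insert_of_mem hj) hij)]
    rw [charSum, charSum, charSum]
    refine finsum_mem_union ?_ (Set.toFinite _) (Set.toFinite _)
    rw [Set.disjoint_left]
    intro g hg hg2
    obtain ⟨j, hjS, hgj⟩ := Set.mem_iUnion₂.mp hg2
    exact Set.disjoint_left.mp
      (hdisj a (Finset.mem_insert_self a S) j (Finset.mem_insert_of_mem hjS)
        (fun hEq => ha (hEq ▸ hjS))) hg hgj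

private lemma card_eq_charSum_one (D : Set G) : (Nat.card D : ℂ) = charSum (1 : G →* ℂˣ) D :=
  (charSum_one D).symm

private lemma pack_pos {c t : ℕ} {P : Fin (t - 1) → Set G} (h : IsNLPPacking c t P) :
    1 ≤ c ∧ 1 ≤ t := by
  by_contra hcon
  have hz : t ^ 2 * c ^ 2 = 0 := by
    rcases not_and_or.mp hcon with h' | h' <;> push_neg at h' <;>
      rw [Nat.lt_one_iff] at h' <;> rw [h'] <;> ring
  have := h.1
  rw [hz] at this
  have hpos : 0 < Nat.card G := Nat.card_pos
  omega

private lemma pack_values {c t : ℕ} {P : Fin (t - 1) → Set G} (h : IsNLPPacking c t P)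
    {χ : G →* ℂˣ} (hχ : χ ≠ 1) (S : Finset (Fin (t - 1))) :
    (∑ j ∈ S, charSum χ (P j) = (S.card : ℂ) * c ∨
     ∑ j ∈ S, charSum χ (P j) = (S.card : ℂ) * c - (t : ℂ) * c) ∧
    (charSum χ (Set.univ \ ({1} ∪ ⋃ i, P i)) + ∑ j ∈ S, charSum χ (P j)
        = ((S.card : ℂ) + 1) * c - 1 ∨
     charSum χ (Set.univ \ ({1} ∪ ⋃ i, P i)) + ∑ j ∈ S, charSum χ (P j)
        = ((S.card : ℂ) + 1) * c - 1 - (t : ℂ) * c) := by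
  obtain ⟨hc, ht⟩ := pack_pos h
  set N := Set.univ \ ({1} ∪ ⋃ i, P i) with hNdef
  have htc : (t : ℂ) * c ≠ 0 := by
    have h0 : ((t * c : ℕ) : ℂ) ≠ 0 := Nat.cast_ne_zero.mpr (Nat.mul_ne_zero (by omega) (by omega))
    push_cast at h0
    exact h0
  have hA : ∀ i, charSum χ (P i) = (c : ℂ) ∨ charSum χ (P i) = (c : ℂ) - (t : ℂ) * c := by
    intro i
    rcases negLatin_char (h.2.1 i) hχ with hx | hx
    · exact Or.inl hx
    · right; rw [hx]; push_cast; ring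
  have hb : charSum χ N = (c : ℂ) - 1 ∨ charSum χ N = (c : ℂ) - 1 - (t : ℂ) * c := by
    rcases negLatin_char (h.2.2) hχ with hx | hx
    · left; rw [hx, Nat.cast_sub hc]; norm_num
    · right; rw [hx, Nat.cast_sub hc]; push_cast; ring
  classical
  set E : Finset (Fin (t - 1)) :=
    Finset.univ.filter (fun i => charSum χ (P i) = (c : ℂ) - (t : ℂ) * c) with hEdef
  have hsumT : ∀ T : Finset (Fin (t - 1)),
      ∑ j ∈ T, charSum χ (P j) = (T.card : ℂ) * c - ((T ∩ E).card : ℂ) * ((t : ℂ) * c) := by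
    intro T
    rw [← Finset.sum_filter_add_sum_filter_not T (fun j => j ∈ E)]
    have e1 : ∑ j ∈ T.filter (fun j => j ∈ E), charSum χ (P j)
        = ((T ∩ E).card : ℂ) * ((c : ℂ) - (t : ℂ) * c) := by
      rw [Finset.filter_mem_eq_inter]
      rw [Finset.sum_congr rfl (fun j hj => ?_), Finset.sum_const, nsmul_eq_mul]
      have := (Finset.mem_inter.mp hj).2
      rw [hEdef] at this
      exact (Finset.mem_filter.mp this).2
    have e2 : ∑ j ∈ T.filter (fun j => ¬ j ∈ E), charSum χ (P j)
        = ((T.filter (fun j => ¬ j ∈ E)).card : ℂ) * (c : ℂ) := by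
      rw [Finset.sum_congr rfl (fun j hj => ?_), Finset.sum_const, nsmul_eq_mul]
      have hjE := (Finset.mem_filter.mp hj).2
      rcases hA j with hx | hx
      · exact hx
      · exfalso
        apply hjE
        rw [hEdef]
        exact Finset.mem_filter.mpr ⟨Finset.mem_univ j, hx⟩
    rw [e1, e2]
    have hsplit : (T.filter (fun j => ¬ j ∈ E)).card = T.card - (T ∩ E).card := by
      rw [← Finset.filter_mem_eq_inter, Finset.filter_not]
      exact (Finset.card_sdiff_of_subset (Finset.filter_subset _ _)).trans rfl
    rw [hsplit, Nat.cast_sub (Finset.card_le_card Finset.inter_subset_left)]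
    ring
  -- global count
  have hglobal : (1 : ℂ) + charSum χ N + ∑ i, charSum χ (P i) = 0 := by
    rw [← pack_charSum_partition h χ]
    exact sum_char_eq_zero hχ
  have huniv := hsumT Finset.univ
  rw [Finset.univ_inter, Finset.card_univ, Fintype.card_fin] at huniv
  have hcastt : ((t - 1 : ℕ) : ℂ) = (t : ℂ) - 1 := by
    rw [Nat.cast_sub ht]; norm_num
  have he : (E.card = 0 ∧ charSum χ N = (c : ℂ) - 1 - (t : ℂ) * c)
      ∨ (E.card = 1 ∧ charSum χ N = (c : ℂ) - 1) := by
    rcases hb with hx | hx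
    · right
      refine ⟨?_, hx⟩
      have : ((E.card : ℕ) : ℂ) * ((t : ℂ) * c) = 1 * ((t : ℂ) * c) := by
        rw [hx, huniv, hcastt] at hglobal
        linear_combination -hglobal
      have := mul_right_cancel₀ htc this
      exact_mod_cast this
    · left
      refine ⟨?_, hx⟩
      have : ((E.card : ℕ) : ℂ) * ((t : ℂ) * c) = 0 * ((t : ℂ) * c) := by
        rw [hx, huniv, hcastt] at hglobal
        linear_combination -hglobal
      have := mul_right_cancel₀ htc this
      exact_mod_cast this
  have hSE : (S ∩ E).card ≤ E.card := Finset.card_le_card Finset.inter_subset_right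
  constructor
  · rcases he with ⟨he0, _⟩ | ⟨he1, _⟩
    · left
      rw [hsumT S]
      have : (S ∩ E).card = 0 := by omega
      rw [this]
      norm_num
    · have : (S ∩ E).card = 0 ∨ (S ∩ E).card = 1 := by omega
      rcases this with h0 | h1
      · left; rw [hsumT S, h0]; norm_num
      · right; rw [hsumT S, h1]; norm_num
  · rcases he with ⟨he0, hbv⟩ | ⟨he1, hbv⟩
    · right
      have : (S ∩ E).card = 0 := by omega
      rw [hsumT S, this, hbv]
      push_cast
      ring
    · have : (S ∩ E).card = 0 ∨ (S ∩ E).card = 1 := by omega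
      rcases this with h0 | h1
      · left; rw [hsumT S, h0, hbv]; push_cast; ring
      · right; rw [hsumT S, h1, hbv]; push_cast; ring

private lemma charSum_union_disjoint (χ : G →* ℂˣ) {A B : Set G} (hAB : Disjoint A B) :
    charSum χ (A ∪ B) = charSum χ A + charSum χ B := by
  rw [charSum, charSum, charSum]
  exact finsum_mem_union hAB (Set.toFinite _) (Set.toFinite _)

end Aux


theorem stmt_16 {G : Type*} [CommGroup G] [Finite G] (c t s : ℕ)
    (P : Fin (t - 1) → Set G) (h : IsNLPPacking c t P) (hs : s ∣ t) :
    ∃ Q : Fin (t / s - 1) → Set G,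
      (∀ i, Q i = ⋃ j : Fin (t - 1),
        ⋃ (_ : (i : ℕ) * s ≤ (j : ℕ) ∧ (j : ℕ) < (i : ℕ) * s + s), P j) ∧
      IsNLPPacking (s * c) (t / s) Q := by
  classical
  have _inst : Fintype G := Fintype.ofFinite G
  obtain ⟨hc, ht⟩ := pack_pos h
  have hs1 : 1 ≤ s := Nat.pos_of_dvd_of_pos hs (by omega)
  have hst : s ≤ t := Nat.le_of_dvd (by omega) hs
  set u := t / s with hudef
  have htsu : u * s = t := Nat.div_mul_cancel hs
  have hu1 : 1 ≤ u := by
    rcases Nat.eq_zero_or_pos u with h0 | h0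
    · rw [h0] at htsu; omega
    · exact h0
  obtain ⟨u', hu'⟩ : ∃ u', u = u' + 1 := ⟨u - 1, by omega⟩
  have htu' : u' * s + s = t := by rw [← htsu, hu']; ring
  set N := Set.univ \ ({1} ∪ ⋃ i, P i) with hNdef
  have hPDS : ∀ i, IsNegLatinPDS (P i) (t * c) c := h.2.1
  have h1P : ∀ j, (1 : G) ∉ P j := fun j => (hPDS j).2.1
  have hPsym : ∀ j, (P j)⁻¹ = P j := fun j => (hPDS j).2.2
  have hcardP : ∀ j, Nat.card (P j) = c * (t * c + 1) := fun j => (hPDS j).1.2.1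
  have hdisj := pack_disjoint h
  have hnsc : u * (s * c) = t * c := by rw [← htsu]; ring
  have htc1 : 1 ≤ t * c := Nat.mul_pos ht hc
  have hsc1 : 1 ≤ s * c := Nat.mul_pos hs1 hc
  -- the new family
  set Q : Fin (u - 1) → Set G := fun i => ⋃ j : Fin (t - 1),
    ⋃ (_ : (i : ℕ) * s ≤ (j : ℕ) ∧ (j : ℕ) < (i : ℕ) * s + s), P j with hQdef
  set block : Fin (u - 1) → Finset (Fin (t - 1)) := fun i =>
    Finset.univ.filter (fun j => (i : ℕ) * s ≤ (j : ℕ) ∧ (j : ℕ) < (i : ℕ) * s + s)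
    with hblockdef
  set tailF : Finset (Fin (t - 1)) := Finset.univ.filter (fun j => t - s ≤ (j : ℕ))
    with htaildef
  have hib : ∀ i : Fin (u - 1), (i : ℕ) * s + s ≤ t - s := by
    intro i
    have h1 : (i : ℕ) < u - 1 := i.isLt
    have h2 : (i : ℕ) + 1 ≤ u' := by omega
    have h3 : ((i : ℕ) + 1) * s ≤ u' * s := Nat.mul_le_mul_right s h2
    have h4 : ((i : ℕ) + 1) * s = (i : ℕ) * s + s := by ring
    omega
  have hQ : ∀ i, Q i = ⋃ j ∈ block i, P j := by
    intro i
    rw [hQdef, hblockdef]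
    ext g
    simp only [Set.mem_iUnion, Finset.mem_filter, Finset.mem_univ, true_and, exists_prop]
  have hblockcard : ∀ i, (block i).card = s := by
    intro i
    have hbij : (block i).card = (Finset.Ico ((i : ℕ) * s) ((i : ℕ) * s + s)).card := by
      rw [hblockdef]
      refine Finset.card_bij' (fun j _ => (j : ℕ)) (fun m hm => ⟨m, ?_⟩) ?_ ?_ ?_ ?_
      · have h5 := Finset.mem_Ico.mp hm
        have h6 := hib i
        exact lt_of_lt_of_le h5.2 (by omega)
      · intro j hj
        have := (Finset.mem_filter.mp hj).2
        show (j : ℕ) ∈ Finset.Ico _ _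
        rw [Finset.mem_Ico]
        omega
      · intro m hm
        have := Finset.mem_Ico.mp hm
        simp only [Finset.mem_filter, Finset.mem_univ, true_and]
        omega
      · intro j _
        rfl
      · intro m _
        rfl
    rw [hbij, Nat.card_Ico]
    omega
  have htailcard : tailF.card = s - 1 := by
    have hbij : tailF.card = (Finset.Ico (t - s) (t - 1)).card := by
      rw [htaildef]
      refine Finset.card_bij' (fun j _ => (j : ℕ)) (fun m hm => ⟨m, ?_⟩) ?_ ?_ ?_ ?_
      · have := Finset.mem_Ico.mp hm
        omega
      · intro j hj
        have h2 := (Finset.mem_filter.mp hj).2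
        have h3 : (j : ℕ) < t - 1 := j.isLt
        show (j : ℕ) ∈ Finset.Ico _ _
        rw [Finset.mem_Ico]
        omega
      · intro m hm
        have := Finset.mem_Ico.mp hm
        simp only [Finset.mem_filter, Finset.mem_univ, true_and]
        omega
      · intro j _
        rfl
      · intro m _
        rfl
    rw [hbij, Nat.card_Ico]
    omega
  -- the union of the new family
  have hUQ : (⋃ i, Q i) = ⋃ j ∈ Finset.univ.filter (fun j : Fin (t - 1) => (j : ℕ) < t - s), P j := by
    ext g
    simp only [Set.mem_iUnion, Finset.mem_filter, Finset.mem_univ, true_and, exists_prop]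
    constructor
    · rintro ⟨i, hgi⟩
      rw [hQ i] at hgi
      obtain ⟨j, hj, hgj⟩ := Set.mem_iUnion₂.mp hgi
      refine ⟨j, ?_, hgj⟩
      have h2 := (Finset.mem_filter.mp hj).2
      have := hib i
      omega
    · rintro ⟨j, hjlt, hgj⟩
      have hs0 : 0 < s := hs1
      have hdiv : (j : ℕ) / s < u - 1 := by
        rw [Nat.div_lt_iff_lt_mul hs0]
        have : (u - 1) * s = u' * s := by rw [hu']; simp
        omega
      refine ⟨⟨(j : ℕ) / s, hdiv⟩, ?_⟩
      rw [hQ ⟨(j : ℕ) / s, hdiv⟩]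
      refine Set.mem_iUnion₂.mpr ⟨j, ?_, hgj⟩
      rw [hblockdef]
      simp only [Finset.mem_filter, Finset.mem_univ, true_and]
      have hdm := Nat.mod_add_div (j : ℕ) s
      have hml := Nat.mod_lt (j : ℕ) hs0
      have hcomm : ((j : ℕ) / s) * s = s * ((j : ℕ) / s) := Nat.mul_comm _ _
      omega
  -- the new leftover set
  have hN' : Set.univ \ ({1} ∪ ⋃ i, Q i) = N ∪ ⋃ j ∈ tailF, P j := by
    rw [hUQ]
    ext g
    constructor
    · intro hg
      obtain ⟨-, hg2⟩ := hg
      have hg1 : g ≠ 1 := fun hcon => hg2 (Set.mem_union_left _ (by simp [hcon]))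
      have hghead : ∀ j : Fin (t - 1), (j : ℕ) < t - s → g ∉ P j := by
        intro j hjlt hgj
        refine hg2 (Set.mem_union_right _ (Set.mem_iUnion₂.mpr ⟨j, ?_, hgj⟩))
        simp only [Finset.mem_filter, Finset.mem_univ, true_and]
        exact hjlt
      by_cases hgU : ∃ j, g ∈ P j
      · obtain ⟨j, hgj⟩ := hgU
        refine Set.mem_union_right _ (Set.mem_iUnion₂.mpr ⟨j, ?_, hgj⟩)
        rw [htaildef]
        simp only [Finset.mem_filter, Finset.mem_univ, true_and]
        by_contra hcon
        push_neg at hcon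
        exact hghead j (by omega) hgj
      · push_neg at hgU
        refine Set.mem_union_left _ ?_
        rw [hNdef]
        refine ⟨Set.mem_univ g, fun hcon => ?_⟩
        rcases hcon with h1 | h2
        · exact hg1 (Set.mem_singleton_iff.mp h1)
        · obtain ⟨j, hgj⟩ := Set.mem_iUnion.mp h2
          exact hgU j hgj
    · intro hg
      refine ⟨Set.mem_univ g, fun hcon => ?_⟩
      rcases hg with hgN | hgT
      · rw [hNdef] at hgN
        rcases hcon with h1 | h2
        · exact hgN.2 (Set.mem_union_left _ h1)
        · obtain ⟨j, _, hgj⟩ := Set.mem_iUnion₂.mp h2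
          exact hgN.2 (Set.mem_union_right _ (Set.mem_iUnion.mpr ⟨j, hgj⟩))
      · obtain ⟨j, hjT, hgj⟩ := Set.mem_iUnion₂.mp hgT
        have hjt : t - s ≤ (j : ℕ) := by
          rw [htaildef] at hjT
          exact (Finset.mem_filter.mp hjT).2
        rcases hcon with h1 | h2
        · exact h1P j (Set.mem_singleton_iff.mp h1 ▸ hgj)
        · obtain ⟨j', hj', hgj'⟩ := Set.mem_iUnion₂.mp h2
          have hj'lt : (j' : ℕ) < t - s := (Finset.mem_filter.mp hj').2
          have hne : j' ≠ j := fun hEq => by rw [hEq] at hj'lt; omega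
          exact Set.disjoint_left.mp (hdisj j' j hne) hgj' hgj
  -- disjointness of N from the tail union и pairwise facts
  have hNdisj : Disjoint N (⋃ j ∈ tailF, P j) := by
    rw [Set.disjoint_left]
    intro g hgN hgU
    obtain ⟨j, _, hgj⟩ := Set.mem_iUnion₂.mp hgU
    rw [hNdef] at hgN
    exact hgN.2 (Set.mem_union_right _ (Set.mem_iUnion.mpr ⟨j, hgj⟩))
  have hdisj' : ∀ (S : Finset (Fin (t - 1))), ∀ i ∈ S, ∀ j ∈ S, i ≠ j →
      Disjoint (P i) (P j) := fun S i _ j _ hij => hdisj i j hij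
  -- cardinality of the new sets
  have hcardQ : ∀ i, Nat.card (Q i) = (s * c) * ((u * (s * c)) + 1) := by
    intro i
    have hC : (Nat.card (Q i) : ℂ) = (((s * c) * ((u * (s * c)) + 1) : ℕ) : ℂ) := by
      rw [card_eq_charSum_one, hQ i, charSum_biUnion_finset _ _ _ (hdisj' (block i))]
      rw [Finset.sum_congr rfl (fun j (_ : j ∈ block i) =>
        (charSum_one (P j)).trans (by rw [hcardP j]))]
      rw [Finset.sum_const, hblockcard i, nsmul_eq_mul, hnsc]
      push_cast
      ring
    exact Nat.cast_injective hC
  have hcardN : Nat.card N = (c - 1) * (t * c + 1) := h.2.2.1.2.1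
  set N2 : Set G := Set.univ \ ({1} ∪ ⋃ i, Q i) with hN2def
  have hcardN' : Nat.card N2 = (s * c - 1) * ((u * (s * c)) + 1) := by
    have hC : (Nat.card N2 : ℂ)
        = (((s * c - 1) * ((u * (s * c)) + 1) : ℕ) : ℂ) := by
      rw [hN', card_eq_charSum_one, charSum_union_disjoint _ hNdisj]
      rw [charSum_biUnion_finset _ _ _ (hdisj' tailF)]
      rw [Finset.sum_congr rfl (fun j (_ : j ∈ tailF) =>
        (charSum_one (P j)).trans (by rw [hcardP j]))]
      rw [Finset.sum_const, htailcard, nsmul_eq_mul, ← card_eq_charSum_one, hcardN, hnsc]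
      push_cast [Nat.cast_sub hc, Nat.cast_sub hs1, Nat.cast_sub hsc1]
      ring
    exact Nat.cast_injective hC
  -- symmetry and identity-avoidance
  have h1Q : ∀ i, (1 : G) ∉ Q i := by
    intro i hcon
    rw [hQ i] at hcon
    obtain ⟨j, _, hgj⟩ := Set.mem_iUnion₂.mp hcon
    exact h1P j hgj
  have hQsym : ∀ i, (Q i)⁻¹ = Q i := by
    intro i
    ext g
    rw [Set.mem_inv, hQ i]
    simp only [Set.mem_iUnion, exists_prop]
    constructor
    · rintro ⟨j, hj, hgj⟩
      exact ⟨j, hj, by rwa [← hPsym j, Set.mem_inv]⟩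
    · rintro ⟨j, hj, hgj⟩
      exact ⟨j, hj, by rwa [← hPsym j, Set.mem_inv] at hgj⟩
  have h1N' : (1 : G) ∉ N2 := by
    rw [hN2def]
    simp
  have hN'sym : N2⁻¹ = N2 := by
    have hmem : ∀ g : G, g ∈ N2 ↔ g⁻¹ ∈ N2 := by
      have haux : ∀ g : G, g⁻¹ ∈ ({1} ∪ ⋃ i, Q i : Set G) ↔ g ∈ ({1} ∪ ⋃ i, Q i : Set G) := by
        intro g
        simp only [Set.mem_union, Set.mem_singleton_iff, Set.mem_iUnion, inv_eq_one]
        refine or_congr Iff.rfl ⟨fun ⟨i, hi⟩ => ⟨i, ?_⟩, fun ⟨i, hi⟩ => ⟨i, ?_⟩⟩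
        · rwa [← hQsym i, Set.mem_inv]
        · rwa [← hQsym i, Set.mem_inv, inv_inv]
      intro g
      rw [hN2def]
      simp only [Set.mem_diff, Set.mem_univ, true_and]
      rw [haux g]
    ext g
    rw [Set.mem_inv, hmem g]
  -- character values
  have hcharQ : ∀ i, ∀ χ : G →* ℂˣ, χ ≠ 1 →
      charSum χ (Q i) = ((s * c : ℕ) : ℂ) ∨
      charSum χ (Q i) = ((s * c : ℕ) : ℂ) - ((u * (s * c) : ℕ) : ℂ) := by
    intro i χ hχ
    rw [hQ i, charSum_biUnion_finset _ _ _ (hdisj' (block i))]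
    rcases (pack_values h hχ (block i)).1 with hx | hx
    · left; rw [hx, hblockcard i]; push_cast; ring
    · right; rw [hx, hblockcard i, hnsc]; push_cast; ring
  have hcharN' : ∀ χ : G →* ℂˣ, χ ≠ 1 →
      charSum χ N2 = ((s * c - 1 : ℕ) : ℂ) ∨
      charSum χ N2
        = ((s * c - 1 : ℕ) : ℂ) - ((u * (s * c) : ℕ) : ℂ) := by
    intro χ hχ
    rw [hN', charSum_union_disjoint _ hNdisj, charSum_biUnion_finset _ _ _ (hdisj' tailF)]
    rcases (pack_values h hχ tailF).2 with hx | hx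
    · left
      rw [hx, htailcard]
      push_cast [Nat.cast_sub hsc1, Nat.cast_sub hs1]
      ring
    · right
      rw [hx, htailcard, hnsc]
      push_cast [Nat.cast_sub hsc1, Nat.cast_sub hs1]
      ring
  -- conclusion
  have hvG : Nat.card G = (u * (s * c)) ^ 2 := by
    rw [hnsc, h.1]
    ring
  refine ⟨Q, fun i => rfl, ?_, ?_, ?_⟩
  · rw [h.1, ← htsu]
    ring
  · intro i
    exact char_negLatin hvG (hcardQ i) (h1Q i) (hQsym i) (fun χ hχ => by
      rcases hcharQ i χ hχ with hx | hx
      · left; rw [hx]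
      · right; rw [hx])
  · exact hN2def ▸ char_negLatin hvG hcardN' h1N' hN'sym (fun χ hχ => by
      rcases hcharN' χ hχ with hx | hx
      · left; rw [hx]
      · right; rw [hx])
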